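/- Let G be a simple, locally finite hypergraph with no isolated vertices such that G has no nontrivial automorphism. Then every connected component of Γ_G is an asymmetric graph, i.e., has no nontrivial graph automorphism. -/

import Mathlib

open scoped symmDiff

variable {V : Type*}

def Indep (E : Set (Finset V)) (s : Set V) : Prop := ∀ e ∈ E, ¬ ((e : Set V) ⊆ s)

def SimpleHG (E : Set (Finset V)) : Prop :=
  (∀ e ∈ E, 1 < e.card) ∧ ∀ e ∈ E, ∀ e' ∈ E, e ⊆ e' → e = e'

def LocFin (E : Set (Finset V)) : Prop := ∀ v : V, {e ∈ E | v ∈ e}.Finite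

def Nbr (E : Set (Finset V)) (v w : V) : Prop := ∃ e ∈ E, v ∈ e ∧ w ∈ e

def Gamma (E : Set (Finset V)) : SimpleGraph {s : Set V // Indep E s} where
  Adj s t := ∃ v, s.1 ∆ t.1 = {v}
  symm := ⟨fun s t ⟨v, h⟩ => ⟨v, by rwa [symmDiff_comm]⟩⟩
  loopless := ⟨fun s ⟨v, h⟩ => by
    rw [symmDiff_self] at h
    exact absurd h.symm (Set.singleton_ne_empty v)⟩

def Comp (E : Set (Finset V)) (s : Set V) : Set {t : Set V // Indep E t} :=
  {t | (s ∆ t.1).Finite}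

def GammaComp (E : Set (Finset V)) (s : Set V) : SimpleGraph (Comp E s) :=
  (Gamma E).induce (Comp E s)

def xset (E : Set (Finset V)) (s : Set V) (v : V) : Set V :=
  s \ insert v {w | Nbr E v w}

def yset (E : Set (Finset V)) (s : Set V) (v : V) : Set V :=
  insert v (xset E s v)

def IsIsoHG {V W : Type*} (ES : Set (Finset V)) (ET : Set (Finset W)) (f : V → W) : Prop :=
  Function.Bijective f ∧ ∀ e : Finset V, e ∈ ES ↔ ∃ e' ∈ ET, (e' : Set W) = f '' (e : Set V)

/-!
An edge of `Γ_G` is labelled by the vertex in which its endpoints differ. An automorphism `φ`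
of a component maps squares of `Γ_G` to squares, so opposite edges of a square have equal image
labels. Two edges toggling `v` both descend, through squares, to the edge toggling `v` at the
intersection of their endpoints; hence `φ` relabels all `v`-edges by one vertex `f v`, and
`φ a ∆ φ b = f '' (a ∆ b)`. So `φ X = φ a ∆ f '' (a ∆ X)`, and this preserves independence in both
directions. Applied to `X = e ∪ (a \ N(e))`, where `N(e)` is the union of the edges meeting `e`,
and to the independent sets `X \ {u}` for `u ∈ e`, it shows that `f` maps edges into edges.
With the label map of `φ⁻¹` as inverse, `f` is a hypergraph automorphism, hence the identity.
Then `φ` is a translation `X ↦ D ∆ X`, and if `v ∈ D` lies on the edge `e`, the translation maps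
the independent set `(e \ D) ∪ (a \ N(e))` onto a set containing `e`.
-/
theorem symmDiff_symmDiff_symmDiff_cancel {α : Type*} [GeneralizedBooleanAlgebra α] (a b c : α) :
    a ∆ b ∆ (b ∆ c) = a ∆ c := by
  rw [symmDiff_assoc, symmDiff_symmDiff_cancel_left]

theorem eq_of_singleton_symmDiff_eq {p q x y : V} (hpy : p ≠ y) (hpx : p ≠ x)
    (h : ({p} ∆ {y} : Set V) = {x} ∆ {q}) : p = q := by
  have hp : p ∈ ({x} ∆ {q} : Set V) := h ▸ Set.mem_symmDiff.2 (Or.inl ⟨rfl, hpy⟩)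
  simpa [Set.mem_symmDiff, hpx] using hp

theorem symmDiff_sdiff_singleton_of_mem {a : Set V} {u : V} (hu : u ∈ a) : a ∆ (a \ {u}) = {u} := by
  rw [symmDiff_of_ge Set.sdiff_subset, Set.sdiff_sdiff_cancel_left (Set.singleton_subset_iff.2 hu)]

theorem inter_symmDiff_inter_eq_singleton {a b x y : Set V} {v : V} (hva : v ∉ a) (hvx : v ∉ x)
    (hab : a ∆ b = {v}) (hxy : x ∆ y = {v}) : (a ∩ x) ∆ (b ∩ y) = {v} := by
  ext z
  have hz := Set.ext_iff.1 hab z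
  have hz' := Set.ext_iff.1 hxy z
  simp only [Set.mem_symmDiff, Set.mem_inter_iff, Set.mem_singleton_iff] at hz hz' ⊢
  grind

section Hypergraph

variable {E : Set (Finset V)}

theorem Indep.mono {t u : Set V} (ht : Indep E t) (hut : u ⊆ t) : Indep E u :=
  fun e he heu => ht e he (heu.trans hut)

theorem finite_setOf_nbr (hlf : LocFin E) (v : V) : {w | Nbr E v w}.Finite :=
  ((hlf v).biUnion fun e _ => e.finite_toSet).subset fun _ ⟨_, he, hv, hw⟩ =>
    Set.mem_biUnion ⟨he, hv⟩ hw

variable (E) in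
def edgeNbhd (e : Finset V) : Set V := {w | ∃ u ∈ e, Nbr E u w}

theorem finite_edgeNbhd (hlf : LocFin E) (e : Finset V) : (edgeNbhd E e).Finite :=
  (e.finite_toSet.biUnion fun u _ => finite_setOf_nbr hlf u).subset fun _ ⟨_, hu, hw⟩ =>
    Set.mem_biUnion hu hw

theorem subset_edgeNbhd {e : Finset V} (he : e ∈ E) : (e : Set V) ⊆ edgeNbhd E e :=
  fun u hu => ⟨u, hu, e, he, hu, hu⟩

theorem finite_symmDiff_union_diff_edgeNbhd (hlf : LocFin E) {t F : Set V} {e : Finset V}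
    (he : e ∈ E) (hFe : F ⊆ e) : (t ∆ (F ∪ (t \ edgeNbhd E e))).Finite := by
  refine (finite_edgeNbhd hlf e).subset fun z hz => ?_
  rcases Set.mem_symmDiff.1 hz with ⟨hzt, hzX⟩ | ⟨hzF | hzt', hzt⟩
  · by_contra hzN
    exact hzX (Or.inr ⟨hzt, hzN⟩)
  · exact subset_edgeNbhd he (hFe hzF)
  · exact absurd hzt'.1 hzt

theorem indep_union_diff_edgeNbhd (hsimp : SimpleHG E) {t F : Set V} (ht : Indep E t)
    {e : Finset V} (he : e ∈ E) (hFe : F ⊆ e) (heF : ¬ (e : Set V) ⊆ F) :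
    Indep E (F ∪ (t \ edgeNbhd E e)) := by
  intro e' he' hsub
  by_cases hmeet : ∃ w ∈ e', w ∈ F
  · obtain ⟨w, hwe', hwF⟩ := hmeet
    -- `e'` meets `e`, so it lies in `edgeNbhd E e`, hence in `F ⊆ e`; simplicity forces `e' = e`
    have hF : (e' : Set V) ⊆ F := fun z hz =>
      (hsub hz).resolve_right fun h => h.2 ⟨w, hFe hwF, e', he', hwe', hz⟩
    obtain rfl := hsimp.2 e' he' e he (Finset.coe_subset.1 (hF.trans hFe))
    exact heF hF
  · exact ht e' he' fun z hz => ((hsub hz).resolve_left fun h => hmeet ⟨z, hz, h⟩).1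

theorem exists_edge_image_subset (hsimp : SimpleHG E) (hlf : LocFin E) {t S : Set V}
    (ht : Indep E t) {f : V → V} (hf : f.Injective)
    (hS : ∀ X, (t ∆ X).Finite → (Indep E X ↔ Indep E (S ∆ (f '' (t ∆ X)))))
    {e : Finset V} (he : e ∈ E) : ∃ e' ∈ E, f '' e ⊆ e' := by
  set X := (e : Set V) ∪ (t \ edgeNbhd E e)
  have hX : (t ∆ X).Finite := finite_symmDiff_union_diff_edgeNbhd hlf he subset_rfl
  obtain ⟨e', he', hsub⟩ : ∃ e' ∈ E, (e' : Set V) ⊆ S ∆ (f '' (t ∆ X)) := by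
    by_contra! h
    exact (hS X hX).2 h e he Set.subset_union_left
  refine ⟨e', he', ?_⟩
  rintro _ ⟨u, hu, rfl⟩
  by_contra hfu
  -- toggling `u` in `X` gives an independent set, but toggles only `f u ∉ e'` in the image
  have hXu : X ∆ {u} = ((e : Set V) \ {u}) ∪ (t \ edgeNbhd E e) := by
    ext z
    have := @subset_edgeNbhd _ _ _ he z
    simp only [X, Set.mem_symmDiff, Set.mem_union, Set.mem_sdiff, Set.mem_singleton_iff]
    by_cases hz : z = u <;> simp_all
  have hind : Indep E (X ∆ {u}) :=
    hXu ▸ indep_union_diff_edgeNbhd hsimp ht he Set.sdiff_subset fun h => (h hu).2 rfl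
  have himg : S ∆ (f '' (t ∆ (X ∆ {u}))) = S ∆ (f '' (t ∆ X)) ∆ {f u} := by
    rw [← symmDiff_assoc t, Set.image_symmDiff hf, Set.image_singleton, symmDiff_assoc]
  refine (hS _ ?_).1 hind e' he' ?_
  · rw [← symmDiff_assoc]
    exact hX.symmDiff (Set.finite_singleton u)
  · rw [himg]
    exact fun z hz => Set.mem_symmDiff.2 (Or.inl ⟨hsub hz, fun h => hfu (h ▸ hz)⟩)

theorem exists_edge_eq_image (hsimp : SimpleHG E) {f g : V → V}
    (hgf : Function.LeftInverse g f) (hfg : Function.RightInverse g f)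
    (hf : ∀ e ∈ E, ∃ e' ∈ E, f '' e ⊆ e') (hg : ∀ e ∈ E, ∃ e' ∈ E, g '' e ⊆ e')
    {e : Finset V} (he : e ∈ E) : ∃ e' ∈ E, (e' : Set V) = f '' e := by
  obtain ⟨e', he', hfe⟩ := hf e he
  obtain ⟨e'', he'', hge'⟩ := hg e' he'
  have hee'' : (e : Set V) ⊆ e'' := by
    calc (e : Set V) = g '' (f '' e) := (hgf.image_image _).symm
      _ ⊆ g '' e' := Set.image_mono hfe
      _ ⊆ e'' := hge'
  obtain rfl := hsimp.2 e he e'' he'' (Finset.coe_subset.1 hee'')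
  exact ⟨e', he', hfe.antisymm' fun y hy => ⟨g y, hge' ⟨y, hy, rfl⟩, hfg y⟩⟩

theorem isIsoHG_of_image_subset (hsimp : SimpleHG E) {f g : V → V}
    (hgf : Function.LeftInverse g f) (hfg : Function.RightInverse g f)
    (hf : ∀ e ∈ E, ∃ e' ∈ E, f '' e ⊆ e') (hg : ∀ e ∈ E, ∃ e' ∈ E, g '' e ⊆ e') :
    IsIsoHG E E f := by
  refine ⟨⟨hgf.injective, hfg.surjective⟩, fun e => ⟨exists_edge_eq_image hsimp hgf hfg hf hg, ?_⟩⟩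
  rintro ⟨e', he', he'e⟩
  obtain ⟨e'', he'', he''e⟩ := exists_edge_eq_image hsimp hfg hgf hg hf he'
  rw [he'e, hgf.image_image] at he''e
  exact Finset.coe_injective he''e ▸ he''

theorem eq_empty_of_indep_symmDiff (hsimp : SimpleHG E) (hlf : LocFin E)
    (hni : ∀ v : V, ∃ e ∈ E, v ∈ e) {t D : Set V} (ht : Indep E t)
    (hD : ∀ X, (t ∆ X).Finite → Indep E X → Indep E (D ∆ X)) : D = ∅ := by
  by_contra hne
  obtain ⟨v, hv⟩ := Set.nonempty_iff_ne_empty.2 hne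
  obtain ⟨e, he, hve⟩ := hni v
  refine hD _ (finite_symmDiff_union_diff_edgeNbhd hlf he Set.sdiff_subset)
    (indep_union_diff_edgeNbhd hsimp ht he Set.sdiff_subset fun h => (h hve).2 hv) e he
    fun z hz => ?_
  by_cases hzD : z ∈ D
  · exact Or.inl ⟨hzD, by rintro (h | h); exacts [h.2 hzD, h.2 (subset_edgeNbhd he hz)]⟩
  · exact Or.inr ⟨Or.inl ⟨hz, hzD⟩, hzD⟩

end Hypergraph

namespace Comp

variable {E : Set (Finset V)} {s : Set V}

theorem ext {a b : Comp E s} (h : a.1.1 = b.1.1) : a = b := Subtype.ext (Subtype.ext h)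

theorem finite (a : Comp E s) : (s ∆ a.1.1).Finite := a.2

theorem finite_symmDiff (a b : Comp E s) : (a.1.1 ∆ b.1.1).Finite := by
  have h := (finite a).symmDiff (finite b)
  rwa [symmDiff_comm s, symmDiff_symmDiff_symmDiff_cancel] at h

def mk (t : Set V) (ht : Indep E t) (hst : (s ∆ t).Finite) : Comp E s := ⟨⟨t, ht⟩, hst⟩

def erase (a : Comp E s) (u : V) : Comp E s :=
  mk (a.1.1 \ {u}) (a.1.2.mono Set.sdiff_subset) <|
    ((finite a).union (Set.finite_singleton u)).subset fun x => by
      simp only [Set.mem_symmDiff, Set.mem_union, Set.mem_sdiff, Set.mem_singleton_iff]; tauto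

def inter (a b : Comp E s) : Comp E s :=
  mk (a.1.1 ∩ b.1.1) (a.1.2.mono Set.inter_subset_left) <|
    ((finite a).union (finite b)).subset fun x => by
      simp only [Set.mem_symmDiff, Set.mem_union, Set.mem_inter_iff]; tauto

theorem symmDiff_erase {a : Comp E s} {u : V} (hu : u ∈ a.1.1) :
    a.1.1 ∆ (Comp.erase a u).1.1 = {u} :=
  symmDiff_sdiff_singleton_of_mem hu

theorem induction_erase {P : Comp E s → Comp E s → Prop} (refl : ∀ a, P a a)
    (step : ∀ a m u, u ∈ a.1.1 → P (Comp.erase a u) m → P a m)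
    {a m : Comp E s} (hma : m.1.1 ⊆ a.1.1) : P a m := by
  suffices h : ∀ D : Set V, D.Finite → ∀ a : Comp E s, m.1.1 ⊆ a.1.1 → a.1.1 \ m.1.1 = D →
      P a m from
    h _ ((finite_symmDiff a m).subset fun x hx => Or.inl hx) a hma rfl
  intro D hD
  induction D, hD using Set.Finite.induction_on with
  | empty =>
    intro a hma hD
    obtain rfl := ext ((Set.sdiff_eq_empty.1 hD).antisymm hma)
    exact refl a
  | @insert u D huD _ ih =>
    intro a hma hD
    have hu : u ∈ a.1.1 \ m.1.1 := hD ▸ Set.mem_insert u D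
    refine step a m u hu.1 (ih _ (fun x hx => ⟨hma hx, fun h => hu.2 (h ▸ hx)⟩) ?_)
    show (a.1.1 \ {u}) \ m.1.1 = D
    rw [Set.sdiff_sdiff_comm, hD, Set.insert_sdiff_self_of_notMem huD]

theorem exists_symmDiff_eq_singleton (hsimp : SimpleHG E) (hlf : LocFin E) [Nonempty (Comp E s)]
    (v : V) : ∃ a b : Comp E s, v ∉ a.1.1 ∧ a.1.1 ∆ b.1.1 = {v} := by
  obtain ⟨t, ht⟩ := Classical.arbitrary (Comp E s)
  have hvx : v ∉ xset E t.1 v := fun h => h.2 (Set.mem_insert v _)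
  have hxy : xset E t.1 v ∆ yset E t.1 v = {v} := by
    rw [yset, symmDiff_of_le (Set.subset_insert v _), Set.insert_sdiff_eq_singleton hvx]
  -- both sets differ from `t` only inside the finite closed neighbourhood of `v`
  have hfin : ∀ y, y ⊆ t.1 ∪ {v} → xset E t.1 v ⊆ y → (s ∆ y).Finite := by
    intro y hyt hxsub
    refine (Set.Finite.symmDiff_congr ht).2 <|
      ((finite_setOf_nbr hlf v).insert v).subset fun z hz => ?_
    rcases Set.mem_symmDiff.1 hz with ⟨hzt, hzy⟩ | ⟨hzy, hzt⟩
    · by_contra hzN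
      exact hzy (hxsub ⟨hzt, hzN⟩)
    · exact Or.inl ((hyt hzy).resolve_left hzt)
  have hyind : Indep E (yset E t.1 v) := by
    intro e he hey
    by_cases hve : v ∈ e
    · obtain ⟨w, hwe, hwv⟩ := Finset.exists_mem_ne (hsimp.1 e he) v
      exact ((hey hwe).resolve_left hwv).2 (Set.mem_insert_of_mem _ ⟨e, he, hve, hwe⟩)
    · exact t.2 e he fun z hz => ((hey hz).resolve_left fun h => hve (h ▸ hz)).1
  refine ⟨mk _ (t.2.mono Set.sdiff_subset) (hfin _ ?_ subset_rfl),
    mk _ hyind (hfin _ ?_ (Set.subset_insert v _)), hvx, hxy⟩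
  · exact Set.sdiff_subset.trans Set.subset_union_left
  · rintro z (rfl | hz)
    exacts [Or.inr rfl, Or.inl hz.1]

end Comp

namespace GammaComp

variable {E : Set (Finset V)} {s : Set V} (φ : GammaComp E s ≃g GammaComp E s)

theorem exists_symmDiff_map_eq_singleton {a b : Comp E s} {v : V} (h : a.1.1 ∆ b.1.1 = {v}) :
    ∃ w, (φ a).1.1 ∆ (φ b).1.1 = {w} :=
  φ.map_rel_iff.2 ⟨v, h⟩

theorem symmDiff_map_eq_of_square {a b c d : Comp E s} {u v : V} (huv : u ≠ v)
    (hab : a.1.1 ∆ b.1.1 = {v}) (hcd : c.1.1 ∆ d.1.1 = {v})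
    (hac : a.1.1 ∆ c.1.1 = {u}) (hbd : b.1.1 ∆ d.1.1 = {u}) :
    (φ a).1.1 ∆ (φ b).1.1 = (φ c).1.1 ∆ (φ d).1.1 := by
  obtain ⟨p, hp⟩ := exists_symmDiff_map_eq_singleton φ hab
  obtain ⟨q, hq⟩ := exists_symmDiff_map_eq_singleton φ hcd
  obtain ⟨x, hx⟩ := exists_symmDiff_map_eq_singleton φ hac
  obtain ⟨y, hy⟩ := exists_symmDiff_map_eq_singleton φ hbd
  -- the diagonals `a d` and `b c` of the square have nonempty symmetric difference `{u, v}`,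
  -- so their images cannot collapse
  have hdiag : ∀ {a' b' : Comp E s}, a'.1.1 ∆ b'.1.1 = {v} ∆ {u} →
      (φ a').1.1 ∆ (φ b').1.1 ≠ ∅ := by
    intro a' b' h hφ
    have hv : v ∈ a'.1.1 ∆ b'.1.1 := h ▸ Set.mem_symmDiff.2 (Or.inl ⟨rfl, huv.symm⟩)
    rw [φ.injective (Comp.ext (symmDiff_eq_bot.1 hφ)), symmDiff_self] at hv
    exact hv
  have had := hdiag (a' := a) (b' := d) (by rw [← hab, ← hbd, symmDiff_symmDiff_symmDiff_cancel])
  have hbc := hdiag (a' := b) (b' := c)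
    (by rw [← hab, ← hac, symmDiff_comm a.1.1, symmDiff_symmDiff_symmDiff_cancel])
  rw [← symmDiff_symmDiff_symmDiff_cancel _ (φ b).1.1, hp, hy] at had
  rw [← symmDiff_symmDiff_symmDiff_cancel _ (φ a).1.1, symmDiff_comm (φ b).1.1, hp, hx] at hbc
  have hpq : {p} ∆ {y} = ({x} ∆ {q} : Set V) := by
    rw [← hp, ← hy, ← hx, ← hq, symmDiff_symmDiff_symmDiff_cancel,
      symmDiff_symmDiff_symmDiff_cancel]
  rw [hp, hq, eq_of_singleton_symmDiff_eq (fun h => had (by rw [h, symmDiff_self]; rfl))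
    (fun h => hbc (by rw [h, symmDiff_self]; rfl)) hpq]

theorem symmDiff_map_eq_of_subset {v : V} {c d m m' : Comp E s} (hvc : v ∉ c.1.1)
    (hcd : c.1.1 ∆ d.1.1 = {v}) (hmm' : m.1.1 ∆ m'.1.1 = {v}) (hmc : m.1.1 ⊆ c.1.1) :
    (φ c).1.1 ∆ (φ d).1.1 = (φ m).1.1 ∆ (φ m').1.1 := by
  refine Comp.induction_erase (P := fun c m => ∀ d, v ∉ c.1.1 → c.1.1 ∆ d.1.1 = {v} →
    m.1.1 ∆ m'.1.1 = {v} → (φ c).1.1 ∆ (φ d).1.1 = (φ m).1.1 ∆ (φ m').1.1) ?_ ?_ hmc d hvc hcd hmm'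
  · intro c d _ hcd hcm'
    rw [Comp.ext (symmDiff_right_injective _ (hcd.trans hcm'.symm))]
  · intro c m u huc ih d hvc hcd hmm'
    have huv : u ≠ v := fun h => hvc (h ▸ huc)
    have hud : u ∈ d.1.1 := by
      by_contra hud
      exact huv (Set.mem_singleton_iff.1 (hcd ▸ Set.mem_symmDiff.2 (Or.inl ⟨huc, hud⟩)))
    have hcd' : (Comp.erase c u).1.1 ∆ (Comp.erase d u).1.1 = {v} := by
      show (c.1.1 \ {u}) ∆ (d.1.1 \ {u}) = {v}
      ext z
      have hz := Set.ext_iff.1 hcd z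
      simp only [Set.mem_symmDiff, Set.mem_sdiff, Set.mem_singleton_iff] at hz ⊢
      grind
    rw [symmDiff_map_eq_of_square φ huv hcd hcd' (Comp.symmDiff_erase huc)
      (Comp.symmDiff_erase hud)]
    exact ih _ (fun h => hvc h.1) hcd' hmm'

theorem exists_edgeLabel (hsimp : SimpleHG E) (hlf : LocFin E) [Nonempty (Comp E s)] (v : V) :
    ∃ w, ∀ a b : Comp E s, a.1.1 ∆ b.1.1 = {v} → (φ a).1.1 ∆ (φ b).1.1 = {w} := by
  obtain ⟨x, y, hvx, hxy⟩ := Comp.exists_symmDiff_eq_singleton (s := s) hsimp hlf v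
  obtain ⟨w, hw⟩ := exists_symmDiff_map_eq_singleton φ hxy
  -- both `a b` and the reference edge `x y` descend to the `v`-edge from `a ∩ x` to `b ∩ y`
  suffices h : ∀ a b : Comp E s, v ∉ a.1.1 → a.1.1 ∆ b.1.1 = {v} →
      (φ a).1.1 ∆ (φ b).1.1 = {w} by
    refine ⟨w, fun a b hab => ?_⟩
    rcases Set.mem_symmDiff.1 (hab ▸ Set.mem_singleton v) with ⟨-, hvb⟩ | ⟨-, hva⟩
    · rw [symmDiff_comm] at hab ⊢
      exact h b a hvb hab
    · exact h a b hva hab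
  intro a b hva hab
  have hm : (Comp.inter a x).1.1 ∆ (Comp.inter b y).1.1 = {v} :=
    inter_symmDiff_inter_eq_singleton hva hvx hab hxy
  rw [symmDiff_map_eq_of_subset φ hva hab hm Set.inter_subset_left, ← hw,
    symmDiff_map_eq_of_subset φ hvx hxy hm Set.inter_subset_right]

/-- The vertex by which `φ` relabels the edges of `Γ` that toggle `v`
(a junk value unless `exists_edgeLabel` applies). -/
noncomputable def edgeLabel (v : V) : V :=
  @Classical.epsilon V ⟨v⟩ fun w =>
    ∀ a b : Comp E s, a.1.1 ∆ b.1.1 = {v} → (φ a).1.1 ∆ (φ b).1.1 = {w}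

theorem symmDiff_map_eq_edgeLabel (hsimp : SimpleHG E) (hlf : LocFin E) [Nonempty (Comp E s)]
    {a b : Comp E s} {v : V} (h : a.1.1 ∆ b.1.1 = {v}) : (φ a).1.1 ∆ (φ b).1.1 = {edgeLabel φ v} :=
  Classical.epsilon_spec (exists_edgeLabel φ hsimp hlf v) a b h

theorem edgeLabel_symm_edgeLabel (hsimp : SimpleHG E) (hlf : LocFin E) [Nonempty (Comp E s)]
    (v : V) : edgeLabel φ.symm (edgeLabel φ v) = v := by
  obtain ⟨a, b, -, hab⟩ := Comp.exists_symmDiff_eq_singleton (s := s) hsimp hlf v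
  have h := symmDiff_map_eq_edgeLabel φ.symm hsimp hlf
    (symmDiff_map_eq_edgeLabel φ hsimp hlf hab)
  rw [φ.symm_apply_apply, φ.symm_apply_apply, hab] at h
  exact (Set.singleton_eq_singleton_iff.1 h).symm

theorem edgeLabel_injective (hsimp : SimpleHG E) (hlf : LocFin E) [Nonempty (Comp E s)] :
    (edgeLabel φ).Injective :=
  Function.LeftInverse.injective (edgeLabel_symm_edgeLabel φ hsimp hlf)

theorem symmDiff_map_eq_image (hsimp : SimpleHG E) (hlf : LocFin E) (a b : Comp E s) :
    (φ a).1.1 ∆ (φ b).1.1 = edgeLabel φ '' (a.1.1 ∆ b.1.1) := by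
  have : Nonempty (Comp E s) := ⟨a⟩
  have hinj := edgeLabel_injective φ hsimp hlf
  have hsub : ∀ {a m : Comp E s}, m.1.1 ⊆ a.1.1 →
      (φ a).1.1 ∆ (φ m).1.1 = edgeLabel φ '' (a.1.1 ∆ m.1.1) := by
    intro a m hma
    refine Comp.induction_erase (P := fun a m =>
      (φ a).1.1 ∆ (φ m).1.1 = edgeLabel φ '' (a.1.1 ∆ m.1.1)) (fun a => by simp)
      (fun a m u hua ih => ?_) hma
    have hu := Comp.symmDiff_erase hua
    rw [← symmDiff_symmDiff_symmDiff_cancel _ (φ (Comp.erase a u)).1.1, ih,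
      symmDiff_map_eq_edgeLabel φ hsimp hlf hu, ← Set.image_singleton, ← Set.image_symmDiff hinj,
      ← hu, symmDiff_symmDiff_symmDiff_cancel]
  rw [← symmDiff_symmDiff_symmDiff_cancel _ (φ (Comp.inter a b)).1.1, hsub Set.inter_subset_left,
    symmDiff_comm (φ (Comp.inter a b)).1.1, hsub Set.inter_subset_right, symmDiff_comm b.1.1,
    ← Set.image_symmDiff hinj, symmDiff_symmDiff_symmDiff_cancel]

theorem indep_iff_indep_map (hsimp : SimpleHG E) (hlf : LocFin E) (a : Comp E s) {X : Set V}
    (hX : (a.1.1 ∆ X).Finite) :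
    Indep E X ↔ Indep E ((φ a).1.1 ∆ (edgeLabel φ '' (a.1.1 ∆ X))) := by
  have : Nonempty (Comp E s) := ⟨a⟩
  constructor
  · intro hXi
    set X' : Comp E s := Comp.mk X hXi ((Comp.finite a).symmDiff_congr.2 hX)
    have h : (φ a).1.1 ∆ (φ X').1.1 = edgeLabel φ '' (a.1.1 ∆ X) :=
      symmDiff_map_eq_image φ hsimp hlf a X'
    rw [← h, symmDiff_symmDiff_cancel_left]
    exact (φ _).1.2
  · intro hYi
    have hY : (s ∆ ((φ a).1.1 ∆ (edgeLabel φ '' (a.1.1 ∆ X)))).Finite := by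
      refine (Comp.finite (φ a)).symmDiff_congr.2 ?_
      rw [symmDiff_symmDiff_cancel_left]
      exact hX.image _
    set z := φ.symm (Comp.mk _ hYi hY)
    have h := symmDiff_map_eq_image φ hsimp hlf a z
    rw [φ.apply_symm_apply] at h
    have hz : a.1.1 ∆ z.1.1 = a.1.1 ∆ X :=
      Set.image_injective.2 (edgeLabel_injective φ hsimp hlf)
        (h.symm.trans (symmDiff_symmDiff_cancel_left _ _))
    exact symmDiff_right_injective _ hz ▸ z.1.2

theorem isIsoHG_edgeLabel (hsimp : SimpleHG E) (hlf : LocFin E) [Nonempty (Comp E s)] :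
    IsIsoHG E E (edgeLabel φ) := by
  obtain ⟨a⟩ := ‹Nonempty (Comp E s)›
  have himage : ∀ ψ : GammaComp E s ≃g GammaComp E s, ∀ e ∈ E, ∃ e' ∈ E, edgeLabel ψ '' e ⊆ e' :=
    fun ψ _ he => exists_edge_image_subset hsimp hlf a.1.2 (edgeLabel_injective ψ hsimp hlf)
      (fun _ hX => indep_iff_indep_map ψ hsimp hlf a hX) he
  exact isIsoHG_of_image_subset hsimp (edgeLabel_symm_edgeLabel φ hsimp hlf)
    (fun v => by simpa using edgeLabel_symm_edgeLabel φ.symm hsimp hlf v) (himage φ)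
    (himage φ.symm)

end GammaComp

open GammaComp in
theorem stmt10 (E : Set (Finset V)) (hsimp : SimpleHG E) (hlf : LocFin E)
    (hni : ∀ v : V, ∃ e ∈ E, v ∈ e)
    (hasym : ∀ f : V → V, IsIsoHG E E f → ∀ v, f v = v) :
    ∀ (s : Set V) (_hs : Indep E s) (φ : GammaComp E s ≃g GammaComp E s) (x : Comp E s),
      φ x = x := by
  intro s _hs φ x
  have : Nonempty (Comp E s) := ⟨x⟩
  have hid : edgeLabel φ = id := funext (hasym _ (isIsoHG_edgeLabel φ hsimp hlf))
  have hD : (φ x).1.1 ∆ x.1.1 = ∅ := by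
    refine eq_empty_of_indep_symmDiff hsimp hlf hni x.1.2 fun X hX hXi => ?_
    have := (indep_iff_indep_map φ hsimp hlf x hX).1 hXi
    rwa [hid, Set.image_id, ← symmDiff_assoc] at this
  exact Comp.ext (symmDiff_eq_bot.1 hD)
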